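/- A string α over the alphabet {a,b} is in the set P (defined inductively by: a ∈ P, and if α, β ∈ P then the concatenation bαβ ∈ P) if and only if (1) the number of b's in α plus 1 equals the number of a's in α, and (2) every strict prefix β of α satisfies: the number of a's in β is at most the number of b's in β. -/
import Mathlib


inductive AB | a | b
deriving DecidableEq

inductive P : List AB → Prop
  | base : P [AB.a]
  | step {α β : List AB} : P α → P β → P (AB.b :: (α ++ β))

namespace PolishAux

def g (l : List AB) : ℤ := (l.count AB.a : ℤ) - (l.count AB.b : ℤ)

lemma g_append (l m : List AB) : g (l ++ m) = g l + g m := by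
  simp [g, List.count_append]; ring

lemma g_nil : g [] = 0 := by simp [g]

lemma g_single (x : AB) : g [x] = 1 ∨ g [x] = -1 := by
  cases x <;> simp [g]

lemma g_cons_b (l : List AB) : g (AB.b :: l) = g l - 1 := by
  simp [g, List.count_cons]; ring

lemma g_cons_a (l : List AB) : g (AB.a :: l) = g l + 1 := by
  simp [g, List.count_cons]; ring

lemma g_take_succ_le (l : List AB) (n : ℕ) :
    g (l.take (n + 1)) ≤ g (l.take n) + 1 := by
  rw [List.take_succ, g_append]
  rcases h : l[n]? with _ | x
  · simp [g_nil]
  · rcases g_single x with h1 | h1 <;> simp [h1]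

/-- discrete IVT: if g never hits 1 on prefixes, then it stays ≤ 0 -/
lemma stay_nonpos (l : List AB) (h : ∀ n, g (l.take n) ≠ 1) :
    ∀ n, g (l.take n) ≤ 0 := by
  intro n
  induction n with
  | zero => simp [g_nil]
  | succ n ih =>
      have := g_take_succ_le l n
      have := h (n + 1)
      omega

lemma back : ∀ (N : ℕ) (α : List AB), α.length < N → g α = 1 →
    (∀ n < α.length, g (α.take n) ≤ 0) → P α := by
  intro N
  induction N with
  | zero => intro α h; omega
  | succ N ih =>
      intro α hlen h1 h2
      match α with
      | [] => simp [g_nil] at h1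
      | AB.a :: rest =>
          match rest with
          | [] => exact P.base
          | y :: rest' =>
              have h3 := h2 1 (by simp)
              simp [g_cons_a, g_nil] at h3
      | AB.b :: rest =>
          have hg : g rest = 2 := by have := g_cons_b rest; omega
          have hex : ∃ n, g (rest.take n) = 1 := by
            by_contra hc
            push_neg at hc
            have := stay_nonpos rest hc rest.length
            rw [List.take_length] at this
            omega
          classical
          let n := Nat.find hex
          have hn : g (rest.take n) = 1 := Nat.find_spec hex
          have hmin : ∀ m < n, g (rest.take m) ≠ 1 := fun m hm => Nat.find_min hex hm
          have hnle : n ≤ rest.length := by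
            by_contra hc
            push_neg at hc
            rw [List.take_of_length_le (le_of_lt hc)] at hn
            omega
          set α₁ := rest.take n with hα₁
          set α₂ := rest.drop n with hα₂
          have hsplit : rest = α₁ ++ α₂ := (List.take_append_drop n rest).symm
          have hlen1 : α₁.length = n := by
            rw [hα₁, List.length_take]; omega
          have hlen2 : α₂.length = rest.length - n := by
            rw [hα₂, List.length_drop]
          -- prefix bound transferred to rest
          have hrest : ∀ m < rest.length, g (rest.take m) ≤ 1 := by
            intro m hm
            have := h2 (m + 1) (by simp; omega)
            rw [List.take_succ_cons, g_cons_b] at this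
            omega
          have hP1 : P α₁ := by
            apply ih α₁ (by simp at hlen; omega) hn
            intro m hm
            rw [hlen1] at hm
            have heq : α₁.take m = rest.take m := by
              rw [hα₁, List.take_take]
              congr 1
              omega
            rw [heq]
            have := hrest m (by omega)
            have := hmin m hm
            omega
          have hP2 : P α₂ := by
            have hg2 : g α₂ = 1 := by
              have := g_append α₁ α₂
              rw [← hsplit] at this
              omega
            apply ih α₂ (by simp at hlen ⊢; omega) hg2
            intro m hm
            rw [hlen2] at hm
            have heq : rest.take (n + m) = α₁ ++ α₂.take m := by
              rw [List.take_add]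
            have hb := hrest (n + m) (by omega)
            rw [heq, g_append, hn] at hb
            omega
          rw [hsplit]
          exact P.step hP1 hP2

lemma fwd (α : List AB) (h : P α) :
    g α = 1 ∧ ∀ n < α.length, g (α.take n) ≤ 0 := by
  induction h with
  | base =>
      constructor
      · simp [g]
      · intro n hn
        simp at hn
        subst hn
        simp [g_nil]
  | @step α β hα hβ ihα ihβ =>
      obtain ⟨ha1, ha2⟩ := ihα
      obtain ⟨hb1, hb2⟩ := ihβ
      constructor
      · rw [g_cons_b, g_append]; omega
      · intro n hn
        match n with
        | 0 => simp [g_nil]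
        | m + 1 =>
            rw [List.take_succ_cons, g_cons_b]
            simp at hn
            rw [List.take_append, g_append]
            by_cases hc : m ≤ α.length
            · rcases eq_or_lt_of_le hc with hc' | hc'
              · rw [hc', List.take_length]
                simp only [Nat.sub_self, List.take_zero, g_nil]
                omega
              · have h1 := ha2 m hc'
                have : m - α.length = 0 := by omega
                rw [this]
                simp [g_nil]
                omega
            · push_neg at hc
              rw [List.take_of_length_le (le_of_lt hc)]
              have h2 := hb2 (m - α.length) (by omega)
              omega

end PolishAux

theorem polish_characterization (α : List AB) :
    P α ↔
      (α.count AB.b + 1 = α.count AB.a ∧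
        ∀ β : List AB, β <+: α → β ≠ α → β.count AB.a ≤ β.count AB.b) := by
  open PolishAux in
  constructor
  · intro h
    obtain ⟨h1, h2⟩ := PolishAux.fwd α h
    constructor
    · simp only [PolishAux.g] at h1; omega
    · intro β hpre hne
      have hβ : β = α.take β.length := List.prefix_iff_eq_take.mp hpre
      have hlt : β.length < α.length := by
        rcases lt_or_ge β.length α.length with h | h
        · exact h
        · exfalso; apply hne; rw [hβ, List.take_of_length_le h]
      have := h2 β.length hlt
      rw [← hβ] at this
      simp only [PolishAux.g] at this
      omega
  · rintro ⟨h1, h2⟩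
    apply PolishAux.back (α.length + 1) α (by omega)
    · simp only [PolishAux.g]; omega
    · intro n hn
      have hpre : α.take n <+: α := List.take_prefix n α
      have hne : α.take n ≠ α := by
        intro hc
        have := congrArg List.length hc
        rw [List.length_take] at this
        omega
      have := h2 _ hpre hne
      simp only [PolishAux.g]
      omega
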